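/- For a path z in KΔ_{T_α(A)}, if φ_2(z) ≠ 0 then either z lies in Y or n ≤ length(z) ≤ s. -/

import Mathlib

noncomputable section
open Classical

/-- A quiver, given by a type of vertices and a family of types of arrows. -/
structure QD : Type 1 where
  V : Type
  Ar : V → V → Type

namespace QD

variable {Q : QD}

/-- Oriented paths in a quiver, composed from left to right. -/
inductive Path (Q : QD) : Q.V → Q.V → Type
  | nil (i : Q.V) : Path Q i i
  | cons {i j k : Q.V} (a : Q.Ar i j) (p : Path Q j k) : Path Q i k

namespace Path

/-- Concatenation of paths. -/
def comp : {i j k : Q.V} → Path Q i j → Path Q j k → Path Q i k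
  | _, _, _, nil _, q => q
  | _, _, _, cons a p, q => cons a (comp p q)

/-- Length of a path. -/
def length : {i j : Q.V} → Path Q i j → ℕ
  | _, _, nil _ => 0
  | _, _, cons _ p => length p + 1

end Path

/-- A path bundled with its endpoints. -/
def PathIn (Q : QD) : Type := Σ i : Q.V, Σ j : Q.V, Path Q i j

/-- Bundle a path with its endpoints. -/
def Path.sig {i j : Q.V} (p : Path Q i j) : PathIn Q := ⟨i, j, p⟩

/-- The arrow `a` occurs in the path `p`. -/
def Path.arrowMem {i j : Q.V} (a : Q.Ar i j) : {u v : Q.V} → Path Q u v → Prop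
  | _, _, Path.nil _ => False
  | _, _, @Path.cons _ u u' _ b p =>
      (⟨u, u', b⟩ : Σ i : Q.V, Σ j : Q.V, Q.Ar i j) = ⟨i, j, a⟩ ∨ Path.arrowMem a p

end QD

/-- The path algebra of a quiver over a field `K`, described axiomatically:
an algebra with a basis indexed by the paths, multiplying by concatenation. -/
structure PathAlg (K : Type) [Field K] (Q : QD) [Fintype Q.V] where
  P : Type
  [ringP : Ring P]
  [algP : Algebra K P]
  ι : {i j : Q.V} → Q.Path i j → P
  ι_comp : ∀ {i j k : Q.V} (p : Q.Path i j) (q : Q.Path j k), ι (p.comp q) = ι p * ι q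
  ι_ortho : ∀ {i j k l : Q.V} (p : Q.Path i j) (q : Q.Path k l), j ≠ k → ι p * ι q = 0
  sum_nil : (∑ i : Q.V, ι (QD.Path.nil i)) = 1
  li : LinearIndependent K (fun p : QD.PathIn Q => ι p.2.2)
  span_top : Submodule.span K (Set.range (fun p : QD.PathIn Q => ι p.2.2)) = ⊤

attribute [instance] PathAlg.ringP PathAlg.algP

section Main

variable (K : Type) [Field K] (Q : QD) [Fintype Q.V] [∀ i j : Q.V, Fintype (Q.Ar i j)]
variable (n : ℕ) (PA : PathAlg K Q)

/-- The relation whose `RingQuot` is the truncated quiver algebra `KΔ/R_Δ^n`: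
identify with `0` the image of every path of length at least `n`. -/
def truncRel : PA.P → PA.P → Prop := fun u v =>
  v = 0 ∧ ∃ p : QD.PathIn Q, n ≤ p.2.2.length ∧ u = PA.ι p.2.2

/-- The truncated quiver algebra `A = KΔ/R_Δ^n`. -/
abbrev TA : Type := RingQuot (truncRel K Q n PA)

/-- The class in `A = KΔ/R_Δ^n` of a path of `Δ`. -/
def cls {i j : Q.V} (p : Q.Path i j) : TA K Q n PA :=
  RingQuot.mkAlgHom K (truncRel K Q n PA) (PA.ι p)

/-- Index type for the canonical basis of the truncated algebra: paths of length `< n`. -/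
abbrev Short : Type := {p : QD.PathIn Q // p.2.2.length < n}

/-- The Jacobson radical of the truncated algebra. -/
def JradA : Ideal (TA K Q n PA) := Ideal.jacobson ⊥

/-- The socle of `A` as an `A`-bimodule: the two-sided annihilator of the radical,
viewed as a `K`-subspace. -/
def socA : Submodule K (TA K Q n PA) where
  carrier := {z | ∀ r ∈ JradA K Q n PA, r * z = 0 ∧ z * r = 0}
  add_mem' := by
    intro a b ha hb r hr
    exact ⟨by rw [mul_add, (ha r hr).1, (hb r hr).1, add_zero],
      by rw [add_mul, (ha r hr).2, (hb r hr).2, add_zero]⟩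
  zero_mem' := by intro r hr; simp
  smul_mem' := by
    intro c z hz r hr
    exact ⟨by rw [Algebra.mul_smul_comm, (hz r hr).1, smul_zero],
      by rw [Algebra.smul_mul_assoc, (hz r hr).2, smul_zero]⟩

variable (basA : Module.Basis (Short Q n) K (TA K Q n PA))

/-- The dual-basis functional `p̄^*` attached to a path `p` (zero if `p` is long). -/
def coordP (p : QD.PathIn Q) : Module.Dual K (TA K Q n PA) :=
  if h : p.2.2.length < n then basA.coord ⟨p, h⟩ else 0

variable (s : ℕ) [NeZero s] (w : ZMod s → Q.V) (x : ∀ i : ZMod s, Q.Ar (w i) (w (i + 1)))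

/-- The segment `x_i x_{i+1} ⋯ x_{i+m-1}` of the fixed basic cycle `γ = x_1 ⋯ x_s`. -/
def seg : (i : ZMod s) → (m : ℕ) → Q.Path (w i) (w (i + (m : ZMod s)))
  | i, 0 => cast (congrArg (fun v : ZMod s => Q.Path (w i) (w v)) (by push_cast; ring))
      (QD.Path.nil (w i))
  | i, m + 1 => cast (congrArg (fun v : ZMod s => Q.Path (w i) (w v)) (by push_cast; ring))
      (QD.Path.cons (x i) (seg (i + 1) m))

variable (k : K)

/-- The value `α_r(ā, b̄)` of the `r`-th summand of the `2`-cocycle attached to `γ`. -/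
def aTerm {i j l : Q.V} (a : Q.Path i j) (b : Q.Path j l) (r : ZMod s) :
    Module.Dual K (TA K Q n PA) :=
  if (cls K Q n PA a ≠ 0 ∧ cls K Q n PA b ≠ 0 ∧ n ≤ (a.comp b).length ∧ (a.comp b).length < s ∧
      (a.comp b).sig = (seg Q s w x r (a.comp b).length).sig) then
    coordP K Q n PA basA
      ((seg Q s w x (r + ((a.comp b).length : ZMod s)) (s - (a.comp b).length)).sig)
  else if (cls K Q n PA a ≠ 0 ∧ cls K Q n PA b ≠ 0 ∧ (a.comp b).length = s ∧
      (a.comp b).sig = (seg Q s w x r s).sig) then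
    coordP K Q n PA basA ((QD.Path.nil (w r)).sig)
  else 0

variable (αm : TA K Q n PA →ₗ[K] TA K Q n PA →ₗ[K] Module.Dual K (TA K Q n PA))
variable (t : ℕ) (pM : Fin t → QD.PathIn Q)

/-- The ordinary quiver of the Hochschild extension algebra: the quiver `Δ` together with
one extra arrow `y_{p_m} : t(p_m) → s(p_m)` for every `m`. -/
abbrev Qe : QD where
  V := Q.V
  Ar := fun i j => Q.Ar i j ⊕ {m : Fin t // (pM m).2.1 = i ∧ (pM m).1 = j}

/-- The inclusion of paths of `Δ` into paths of the extended quiver. -/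
def embed : {i j : Q.V} → Q.Path i j → (Qe Q t pM).Path i j
  | _, _, QD.Path.nil i => QD.Path.nil (Q := Qe Q t pM) i
  | _, _, QD.Path.cons a p => QD.Path.cons (Q := Qe Q t pM) (Sum.inl a) (embed p)

/-- The number of `y`-arrows occurring in a path of the extended quiver. -/
def numY : {i j : Q.V} → (Qe Q t pM).Path i j → ℕ
  | _, _, QD.Path.nil _ => 0
  | i, _, @QD.Path.cons _ _ j' _ a p =>
      (match (a : Q.Ar i j' ⊕ {m : Fin t // (pM m).2.1 = i ∧ (pM m).1 = j'}) with
        | Sum.inl _ => 0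
        | Sum.inr _ => 1) + numY p

/-- The arrow `y_{p_m}` of the extended quiver. -/
def yArr (m : Fin t) : (Qe Q t pM).Ar (pM m).2.1 (pM m).1 := Sum.inr ⟨m, rfl, rfl⟩

/-- `C` is an `α`-revived cycle of `Δ`. -/
def IsRev {h : Q.V} (C : Q.Path h h) : Prop :=
  ∃ (j : Q.V) (a : Q.Path h j) (b : Q.Path j h),
    0 < a.length ∧ 0 < b.length ∧ cls K Q n PA a ≠ 0 ∧ cls K Q n PA b ≠ 0 ∧
    C = a.comp b ∧ αm (cls K Q n PA a) (cls K Q n PA b) ≠ 0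

/-- `C` is an `α`-revived cycle, viewed inside the extended quiver. -/
def IsRevE {h : Q.V} (C : (Qe Q t pM).Path h h) : Prop :=
  ∃ C₀ : Q.Path h h, C = embed Q t pM C₀ ∧ IsRev K Q n PA αm C₀

/-- `C` is an elementary cycle of weight `wt`. -/
def IsElemW {h : Q.V} (C : (Qe Q t pM).Path h h) (wt : K) : Prop :=
  ∃ (m : Fin t) (δ₂ : Q.Path h (pM m).2.1) (δ₁ : Q.Path (pM m).1 h),
    C = (embed Q t pM δ₂).comp (QD.Path.cons (yArr Q t pM m) (embed Q t pM δ₁)) ∧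
    coordP K Q n PA basA (pM m) (cls K Q n PA (δ₁.comp δ₂)) = wt ∧ wt ≠ 0

/-- `C` is an elementary cycle. -/
def IsElem {h : Q.V} (C : (Qe Q t pM).Path h h) : Prop :=
  ∃ wt : K, IsElemW K Q n PA basA t pM C wt

/-- `C` is a nonzero cycle (elementary or `α`-revived) with weight `wt`. -/
def HasWt {h : Q.V} (C : (Qe Q t pM).Path h h) (wt : K) : Prop :=
  IsElemW K Q n PA basA t pM C wt ∨ (IsRevE K Q n PA αm t pM C ∧ wt = k)

/-- The left action of `A` on `D(A) = Hom_K(A, K)`: `(a · f)(z) = f(z * a)`. -/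
def dL (a : TA K Q n PA) (f : Module.Dual K (TA K Q n PA)) : Module.Dual K (TA K Q n PA) :=
  f ∘ₗ LinearMap.mulRight K a

/-- The right action of `A` on `D(A) = Hom_K(A, K)`: `(f · b)(z) = f(b * z)`. -/
def dR (f : Module.Dual K (TA K Q n PA)) (b : TA K Q n PA) : Module.Dual K (TA K Q n PA) :=
  f ∘ₗ LinearMap.mulLeft K b

variable (T : Type) [Ring T] [Algebra K T]
variable (eT : T ≃ₗ[K] TA K Q n PA × Module.Dual K (TA K Q n PA))
variable (PB : PathAlg K (Qe Q t pM))
variable (Φm : PB.P →ₐ[K] T)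

/-- `φ₁ = π₁ ∘ Φ`. -/
def ph1 (z : PB.P) : TA K Q n PA := (eT (Φm z)).1

/-- `φ₂ = π₂ ∘ Φ`. -/
def ph2 (z : PB.P) : Module.Dual K (TA K Q n PA) := (eT (Φm z)).2

/-- The primitive idempotent of `T` corresponding to a vertex. -/
def eV (i : Q.V) : T := eT.symm (cls K Q n PA (QD.Path.nil i), 0)

end Main

section Extra

variable (K : Type) [Field K] (Q : QD) [Fintype Q.V] [∀ i j : Q.V, Fintype (Q.Ar i j)]
variable (n : ℕ) (PA : PathAlg K Q)
variable (t : ℕ) (pM : Fin t → QD.PathIn Q)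
variable (T : Type) [Ring T] [Algebra K T]
variable (PB : PathAlg K (Qe Q t pM))
variable (Φm : PB.P →ₐ[K] T)

/-- The Jacobson radical of a ring. -/
def JT : Ideal T := Ideal.jacobson ⊥

/-- The Jacobson radical, viewed as a `K`-subspace. -/
def JTK : Submodule K T := Submodule.restrictScalars K (JT T)

/-- The square of the Jacobson radical, as a `K`-subspace. -/
def J2K : Submodule K T := JTK K T * JTK K T

/-- The number of arrows `i → j` in the Gabriel (ordinary) quiver of `T`,
i.e. `dim_K e_i (rad T / rad² T) e_j`. -/
def gabrielCount (ei ej : T) : ℕ :=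
  Module.finrank K
      ↥(Submodule.span K {y : T | ∃ z ∈ JT T, y = ei * z * ej} ⊔ J2K K T)
    - Module.finrank K ↥(J2K K T)

/-- `e` is a primitive idempotent. -/
def IsPrimIdem (e : T) : Prop :=
  e * e = e ∧ e ≠ 0 ∧
  ∀ f g : T, f * f = f → g * g = g → f * g = 0 → g * f = 0 → e = f + g → f = 0 ∨ g = 0

/-- `a` is an arrow of the ring `T` in the sense of Brenner:
`a ∈ rad T \ rad² T` and `a = x a y` for primitive idempotents `x, y`. -/
def IsArrowT (a : T) : Prop :=
  a ∈ JT T ∧ a ∉ J2K K T ∧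
  ∃ e f : T, IsPrimIdem T e ∧ IsPrimIdem T f ∧ a = e * a * f

/-- `rad (T e)`, a left submodule. -/
def radLe (e : T) : Submodule T T := Submodule.span T ((fun z => z * e) '' (JT T : Set T))

/-- `rad (e T)`, a right submodule. -/
def radRe (e : T) : Submodule Tᵐᵒᵖ T := Submodule.span Tᵐᵒᵖ ((fun z => e * z) '' (JT T : Set T))

/-- `Λ` is a complete set of arrows for `rad (T e)`. -/
def CompleteL (e : T) (Λ : Set T) : Prop :=
  (∀ a ∈ Λ, IsArrowT K T a) ∧ Submodule.span T Λ = radLe T e ∧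
  ∀ Λ' ⊂ Λ, Submodule.span T Λ' ≠ radLe T e

/-- `Γ` is a complete set of arrows for `rad (e T)`. -/
def CompleteR (e : T) (Γ : Set T) : Prop :=
  (∀ a ∈ Γ, IsArrowT K T a) ∧ Submodule.span Tᵐᵒᵖ Γ = radRe T e ∧
  ∀ Γ' ⊂ Γ, Submodule.span Tᵐᵒᵖ Γ' ≠ radRe T e

/-- `(N, nn) ∈ 𝒩` in the sense of Brenner, for the primitive idempotent `e`. -/
def mcN (e : T) (N nn : ℕ) : Prop :=
  ∃ Λ Γ : Fin (nn + 1) → Set T,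
    (∀ i : Fin (nn + 1), (i : ℕ) ≠ 0 → (Λ i).Nonempty ∧ (Γ i).Nonempty) ∧
    (∀ i j : Fin (nn + 1), i ≠ j → Λ i ∩ Λ j = ∅ ∧ Γ i ∩ Γ j = ∅) ∧
    CompleteL K T e (⋃ i, Λ i) ∧ CompleteR K T e (⋃ i, Γ i) ∧
    (∀ i j : Fin (nn + 1), (i ≠ j ∨ (i : ℕ) = 0 ∨ (j : ℕ) = 0) →
      ∀ a ∈ Λ i, ∀ b ∈ Γ j, a * b = 0) ∧
    N = nn + (Λ 0).ncard

/-- The set `𝒞_h` of oriented cycles at `h` of the extended quiver that are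
nonzero in the Hochschild extension algebra. -/
def Ch (h : Q.V) : Type :=
  {C : (Qe Q t pM).Path h h // 0 < C.length ∧ Φm (PB.ι C) ≠ 0}

/-- The relation `ℛ` on `𝒞_h`: the two cycles share an arrow which starts or ends at `h`. -/
def Rc (h : Q.V) (C C' : Ch K Q t pM T PB Φm h) : Prop :=
  ∃ (u v : Q.V) (a : (Qe Q t pM).Ar u v), (u = h ∨ v = h) ∧
    QD.Path.arrowMem a C.1 ∧ QD.Path.arrowMem a C'.1

/-- `card (𝒞_h / ≡)`, the number of equivalence classes of `𝒞_h` under the equivalence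
relation generated by `ℛ`. -/
def NCh (h : Q.V) : ℕ := Nat.card (Quot (Rc K Q t pM T PB Φm h))

/-- The set `𝒜_h` of arrows of the extended quiver ending at `h`. -/
def Ah (h : Q.V) : Type := Σ u : Q.V, (Qe Q t pM).Ar u h

/-- The relation `ℛ'` on `𝒜_h`: there is an arrow `b` with `ab ≠ 0 ≠ a'b` in `T_α(A)`. -/
def Ra (h : Q.V) (a a' : Ah Q t pM h) : Prop :=
  ∃ (v : Q.V) (b : (Qe Q t pM).Ar h v),
    Φm (PB.ι (QD.Path.cons a.2 (QD.Path.cons b (QD.Path.nil (Q := Qe Q t pM) v)))) ≠ 0 ∧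
    Φm (PB.ι (QD.Path.cons a'.2 (QD.Path.cons b (QD.Path.nil (Q := Qe Q t pM) v)))) ≠ 0

/-- `card (𝒜_h / ≈)`. -/
def NAh (h : Q.V) : ℕ := Nat.card (Quot (Ra K Q t pM T PB Φm h))

end Extra

/-- An `R`-module is indecomposable if it is nonzero and is not the internal direct
sum of two nonzero submodules. -/
def Indec (R M : Type) [Ring R] [AddCommGroup M] [Module R M] : Prop :=
  (⊥ : Submodule R M) ≠ ⊤ ∧ ∀ p q : Submodule R M, IsCompl p q → p = ⊥ ∨ q = ⊥


section Statements

variable (K : Type) [Field K] (Q : QD) [Fintype Q.V] [∀ i j : Q.V, Fintype (Q.Ar i j)]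
variable (n : ℕ) (PA : PathAlg K Q)
variable (basA : Module.Basis (Short Q n) K (TA K Q n PA))
variable (s : ℕ) [NeZero s] (w : ZMod s → Q.V) (x : ∀ i : ZMod s, Q.Ar (w i) (w (i + 1)))
variable (k : K)
variable (αm : TA K Q n PA →ₗ[K] TA K Q n PA →ₗ[K] Module.Dual K (TA K Q n PA))
variable (t : ℕ) (pM : Fin t → QD.PathIn Q)
variable (T : Type) [Ring T] [Algebra K T]
variable (eT : T ≃ₗ[K] TA K Q n PA × Module.Dual K (TA K Q n PA))
variable (PB : PathAlg K (Qe Q t pM))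
variable (Φm : PB.P →ₐ[K] T)

lemma aux_len_comp {i j l : Q.V} (p : Q.Path i j) (q : Q.Path j l) :
    (p.comp q).length = p.length + q.length := by
  induction p with
  | nil => simp [QD.Path.comp, QD.Path.length]
  | cons a p ih => simp [QD.Path.comp, QD.Path.length, ih]; omega

lemma aux_len_embed {i j : Q.V} (p : Q.Path i j) :
    (embed Q t pM p).length = p.length := by
  induction p with
  | nil => rfl
  | cons a p ih => simp [embed, QD.Path.length, ih]

lemma aux_exists_embed : ∀ {i j : Q.V} (z : (Qe Q t pM).Path i j),
    numY Q t pM z = 0 → ∃ z₀ : Q.Path i j, z = embed Q t pM z₀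
  | _, _, QD.Path.nil i, _ => ⟨QD.Path.nil (Q := Q) i, rfl⟩
  | _, _, QD.Path.cons (Sum.inl b) p, h => by
      have hp : numY Q t pM p = 0 := by simpa [numY] using h
      obtain ⟨p₀, rfl⟩ := aux_exists_embed p hp
      exact ⟨QD.Path.cons b p₀, rfl⟩
  | _, _, QD.Path.cons (Sum.inr m) p, h => by simp [numY] at h

lemma aux_cls_comp {i j l : Q.V} (p : Q.Path i j) (q : Q.Path j l) :
    cls K Q n PA (p.comp q) = cls K Q n PA p * cls K Q n PA q := by
  unfold cls; rw [PA.ι_comp, map_mul]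

lemma aux_cls_long {i j : Q.V} (p : Q.Path i j) (h : n ≤ p.length) :
    cls K Q n PA p = 0 := by
  have hrel : truncRel K Q n PA (PA.ι p) 0 := ⟨rfl, ⟨⟨i, j, p⟩, h, rfl⟩⟩
  unfold cls
  rw [RingQuot.mkAlgHom_rel K hrel, map_zero]

lemma aux_cls_ortho {i j u v : Q.V} (p : Q.Path i j) (q : Q.Path u v) (h : j ≠ u) :
    cls K Q n PA p * cls K Q n PA q = 0 := by
  unfold cls; rw [← map_mul, PA.ι_ortho p q h, map_zero]

lemma aux_dL_zero (c : TA K Q n PA) : dL K Q n PA c 0 = 0 :=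
  LinearMap.zero_comp _

lemma aux_dR_zero (c : TA K Q n PA) : dR K Q n PA 0 c = 0 :=
  LinearMap.zero_comp _

lemma aux_dL_add (c : TA K Q n PA) (f g : Module.Dual K (TA K Q n PA)) :
    dL K Q n PA c (f + g) = dL K Q n PA c f + dL K Q n PA c g :=
  LinearMap.add_comp _ _ _

lemma aux_dL_smul (c : TA K Q n PA) (a : K) (f : Module.Dual K (TA K Q n PA)) :
    dL K Q n PA c (a • f) = a • dL K Q n PA c f :=
  LinearMap.smul_comp _ _ _

lemma aux_dL_sum {ι : Type*} (S : Finset ι) (c : TA K Q n PA)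
    (f : ι → Module.Dual K (TA K Q n PA)) :
    dL K Q n PA c (∑ r ∈ S, f r) = ∑ r ∈ S, dL K Q n PA c (f r) := by
  ext z; simp [dL, LinearMap.sum_apply]

lemma aux_dL_dL (a b : TA K Q n PA) (f : Module.Dual K (TA K Q n PA)) :
    dL K Q n PA a (dL K Q n PA b f) = dL K Q n PA (a * b) f := by
  unfold dL; ext z
  simp [mul_assoc]

lemma aux_len_cast {Q : QD} {i j j' : Q.V} (e : j = j')
    (h : Q.Path i j = Q.Path i j') (p : Q.Path i j) :
    (cast h p).length = p.length := by subst e; rfl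

lemma aux_seg_len : ∀ (m : ℕ) (r : ZMod s), (seg Q s w x r m).length = m := by
  intro m
  induction m with
  | zero =>
    intro r
    rw [seg, aux_len_cast (congrArg w (by push_cast; ring))]
    rfl
  | succ m ih =>
    intro r
    rw [seg, aux_len_cast (congrArg w (by push_cast; ring))]
    simp [QD.Path.length, ih]

lemma aux_dL_coordP (hbas : ∀ sp : Short Q n, basA sp = cls K Q n PA sp.1.2.2)
    (pp : QD.PathIn Q) {u v : Q.V} (q : Q.Path u v) (hq : pp.2.2.length < q.length) :
    dL K Q n PA (cls K Q n PA q) (coordP K Q n PA basA pp) = 0 := by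
  unfold coordP
  split_ifs with h
  · refine Module.Basis.ext basA ?_
    intro sp
    obtain ⟨⟨a, b, v₀⟩, hlt⟩ := sp
    show (basA.coord ⟨pp, h⟩) (basA ⟨⟨a, b, v₀⟩, hlt⟩ * cls K Q n PA q) = _
    rw [hbas ⟨⟨a, b, v₀⟩, hlt⟩]
    by_cases he : b = u
    · subst he
      rw [show cls K Q n PA v₀ = cls K Q n PA (⟨⟨a, b, v₀⟩, hlt⟩ : Short Q n).1.2.2 from rfl]
      rw [← aux_cls_comp K Q n PA v₀ q]
      by_cases hl : (v₀.comp q).length < n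
      · rw [← hbas ⟨⟨a, v, v₀.comp q⟩, hl⟩, Module.Basis.coord_apply, Module.Basis.repr_self,
          Finsupp.single_apply, if_neg]
        · simp
        · intro hEq
          have h1 := congrArg (fun z : Short Q n => z.1.2.2.length) hEq
          simp only at h1
          rw [aux_len_comp] at h1
          omega
      · rw [aux_cls_long K Q n PA _ (le_of_not_gt hl), map_zero]
        simp
    · rw [aux_cls_ortho K Q n PA v₀ q he, map_zero]
      simp
  · exact aux_dL_zero K Q n PA _

lemma aux_main
    (hbas : ∀ sp : Short Q n, basA sp = cls K Q n PA sp.1.2.2)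
    (hns : n < s)
    (hα : ∀ {i j l : Q.V} (a : Q.Path i j) (b : Q.Path j l),
      αm (cls K Q n PA a) (cls K Q n PA b) =
        k • ∑ r : ZMod s, aTerm K Q n PA basA s w x a b r)
    (hTmul : ∀ u v : T, eT (u * v) = ((eT u).1 * (eT v).1,
      dL K Q n PA (eT u).1 (eT v).2 + dR K Q n PA (eT u).2 (eT v).1 + αm (eT u).1 (eT v).1))
    (hΦnil : ∀ i : Q.V, Φm (PB.ι (QD.Path.nil (Q := Qe Q t pM) i))
      = eT.symm (cls K Q n PA (QD.Path.nil i), 0))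
    (hΦarr : ∀ {i j : Q.V} (a : Q.Ar i j),
      Φm (PB.ι (QD.Path.cons (Sum.inl a) (QD.Path.nil (Q := Qe Q t pM) j)))
      = eT.symm (cls K Q n PA (QD.Path.cons a (QD.Path.nil j)), 0))
    {i j : Q.V} (p : Q.Path i j) :
    (eT (Φm (PB.ι (embed Q t pM p)))).1 = cls K Q n PA p ∧
    (p.length < n → (eT (Φm (PB.ι (embed Q t pM p)))).2 = 0) ∧
    (s < p.length → (eT (Φm (PB.ι (embed Q t pM p)))).2 = 0) ∧
    (∀ (u : Q.V) (q : Q.Path u i), s < q.length + p.length →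
      dL K Q n PA (cls K Q n PA q) (eT (Φm (PB.ι (embed Q t pM p)))).2 = 0) := by
  induction p with
  | nil i =>
    have hE : eT (Φm (PB.ι (embed Q t pM (QD.Path.nil i))))
        = (cls K Q n PA (QD.Path.nil i), 0) := by
      show eT (Φm (PB.ι (QD.Path.nil (Q := Qe Q t pM) i))) = _
      rw [hΦnil, LinearEquiv.apply_symm_apply]
    exact ⟨by rw [hE], fun _ => by rw [hE], fun _ => by rw [hE],
      fun u q _ => by rw [hE]; exact aux_dL_zero K Q n PA _⟩
  | @cons i j' j a p ih =>
    obtain ⟨ih1, ih2, ih3, ih4⟩ := ih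
    have hsplit : PB.ι (embed Q t pM (QD.Path.cons a p)) =
        PB.ι (QD.Path.cons (Sum.inl a) (QD.Path.nil (Q := Qe Q t pM) j')) *
          PB.ι (embed Q t pM p) := by
      rw [← PB.ι_comp]; rfl
    have key : eT (Φm (PB.ι (embed Q t pM (QD.Path.cons a p)))) =
        (cls K Q n PA (QD.Path.cons a (QD.Path.nil j')) * cls K Q n PA p,
         dL K Q n PA (cls K Q n PA (QD.Path.cons a (QD.Path.nil j')))
             (eT (Φm (PB.ι (embed Q t pM p)))).2
           + αm (cls K Q n PA (QD.Path.cons a (QD.Path.nil j'))) (cls K Q n PA p)) := by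
      rw [hsplit, map_mul, hTmul, hΦarr, LinearEquiv.apply_symm_apply, ih1]
      rw [show ((cls K Q n PA (QD.Path.cons a (QD.Path.nil j')),
          (0 : Module.Dual K (TA K Q n PA))).2 = 0) from rfl]
      rw [aux_dR_zero, add_zero]
    have hL : ((QD.Path.cons a (QD.Path.nil j')).comp p).length = p.length + 1 := by
      rw [aux_len_comp]; simp [QD.Path.length]; omega
    have hlenc : (QD.Path.cons a p).length = p.length + 1 := rfl
    refine ⟨?_, ?_, ?_, ?_⟩
    · rw [key]
      show cls K Q n PA (QD.Path.cons a (QD.Path.nil j')) * cls K Q n PA p = _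
      rw [← aux_cls_comp K Q n PA]; rfl
    · intro h
      rw [key]
      show dL K Q n PA _ _ + αm _ _ = 0
      rw [ih2 (by omega), aux_dL_zero, zero_add, hα]
      have hz : ∀ r : ZMod s,
          aTerm K Q n PA basA s w x (QD.Path.cons a (QD.Path.nil j')) p r = 0 := by
        intro r
        unfold aTerm
        rw [if_neg, if_neg]
        · rintro ⟨-, -, hLs, -⟩
          rw [hL] at hLs
          omega
        · rintro ⟨-, -, hn', -⟩
          rw [hL] at hn'
          omega
      simp [hz]
    · intro h
      rw [key]
      show dL K Q n PA _ _ + αm _ _ = 0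
      have h1 : dL K Q n PA (cls K Q n PA (QD.Path.cons a (QD.Path.nil j')))
          (eT (Φm (PB.ι (embed Q t pM p)))).2 = 0 := by
        apply ih4 i (QD.Path.cons a (QD.Path.nil j'))
        simp only [QD.Path.length]
        omega
      have h2 : αm (cls K Q n PA (QD.Path.cons a (QD.Path.nil j'))) (cls K Q n PA p) = 0 := by
        rw [hα]
        have hz : ∀ r : ZMod s,
            aTerm K Q n PA basA s w x (QD.Path.cons a (QD.Path.nil j')) p r = 0 := by
          intro r
          unfold aTerm
          rw [if_neg, if_neg]
          · rintro ⟨-, -, hLs, -⟩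
            rw [hL] at hLs
            omega
          · rintro ⟨-, -, -, hs', -⟩
            rw [hL] at hs'
            omega
        simp [hz]
      rw [h1, h2, add_zero]
    · intro u q hq
      rw [key]
      show dL K Q n PA _ (dL K Q n PA _ _ + αm _ _) = 0
      rw [aux_dL_add]
      have t1 : dL K Q n PA (cls K Q n PA q)
          (dL K Q n PA (cls K Q n PA (QD.Path.cons a (QD.Path.nil j')))
            (eT (Φm (PB.ι (embed Q t pM p)))).2) = 0 := by
        rw [aux_dL_dL, ← aux_cls_comp K Q n PA]
        apply ih4 u (q.comp (QD.Path.cons a (QD.Path.nil j')))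
        rw [aux_len_comp]
        simp only [QD.Path.length]
        omega
      have t2 : dL K Q n PA (cls K Q n PA q)
          (αm (cls K Q n PA (QD.Path.cons a (QD.Path.nil j'))) (cls K Q n PA p)) = 0 := by
        rw [hα, aux_dL_smul, aux_dL_sum]
        have hz : ∀ r : ZMod s, dL K Q n PA (cls K Q n PA q)
            (aTerm K Q n PA basA s w x (QD.Path.cons a (QD.Path.nil j')) p r) = 0 := by
          intro r
          unfold aTerm
          split_ifs with h1 h2
          · apply aux_dL_coordP K Q n PA basA hbas
            obtain ⟨-, -, -, hs', -⟩ := h1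
            rw [hL] at hs'
            show (seg Q s w x _ (s - ((QD.Path.cons a (QD.Path.nil j')).comp p).length)).length
              < q.length
            rw [aux_seg_len, hL]
            omega
          · apply aux_dL_coordP K Q n PA basA hbas
            obtain ⟨-, -, hs', -⟩ := h2
            rw [hL] at hs'
            show (QD.Path.nil (w r)).length < q.length
            show 0 < q.length
            omega
          · exact aux_dL_zero K Q n PA _
        simp [hz]
      rw [t1, t2, add_zero]

/-- if `φ₂(z) ≠ 0` for a path `z` of the extended quiver, then `z` lies in
the ideal `Y` (i.e. contains a `y`-arrow) or `n ≤ length z ≤ s`. -/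
theorem stmt6
    [IsAlgClosed K]
    (hn : 2 ≤ n)
    (hdim : 1 < Module.finrank K (TA K Q n PA))
    (hconn : ∀ i j : Q.V,
      Relation.EqvGen (fun u v : Q.V => Nonempty (Q.Ar u v) ∨ Nonempty (Q.Ar v u)) i j)
    (hcyc : ∀ (i : Q.V) (p : Q.Path i i), 0 < p.length → cls K Q n PA p = 0)
    (hbas : ∀ sp : Short Q n, basA sp = cls K Q n PA sp.1.2.2)
    (hs1 : n + 1 ≤ s) (hs2 : s ≤ 2 * n - 2)
    (hk : k ≠ 0)
    (hα : ∀ {i j l : Q.V} (a : Q.Path i j) (b : Q.Path j l),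
      αm (cls K Q n PA a) (cls K Q n PA b) =
        k • ∑ r : ZMod s, aTerm K Q n PA basA s w x a b r)
    (hcoc : ∀ a b c : TA K Q n PA,
      dL K Q n PA a (αm b c) + αm a (b * c) = αm (a * b) c + dR K Q n PA (αm a b) c)
    (hMlt : ∀ m : Fin t, (pM m).2.2.length < n)
    (hMli : LinearIndependent K fun m : Fin t => cls K Q n PA (pM m).2.2)
    (hMsp : Submodule.span K (Set.range fun m : Fin t => cls K Q n PA (pM m).2.2)
      = socA K Q n PA)
    (hTmul : ∀ u v : T, eT (u * v) = ((eT u).1 * (eT v).1,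
      dL K Q n PA (eT u).1 (eT v).2 + dR K Q n PA (eT u).2 (eT v).1 + αm (eT u).1 (eT v).1))
    (hTone : eT 1 = (1, 0))
    (hΦnil : ∀ i : Q.V, Φm (PB.ι (QD.Path.nil (Q := Qe Q t pM) i))
      = eT.symm (cls K Q n PA (QD.Path.nil i), 0))
    (hΦarr : ∀ {i j : Q.V} (a : Q.Ar i j),
      Φm (PB.ι (QD.Path.cons (Sum.inl a) (QD.Path.nil (Q := Qe Q t pM) j)))
      = eT.symm (cls K Q n PA (QD.Path.cons a (QD.Path.nil j)), 0))
    (hΦy : ∀ m : Fin t,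
      Φm (PB.ι (QD.Path.cons (yArr Q t pM m) (QD.Path.nil (Q := Qe Q t pM) (pM m).1)))
      = eT.symm (0, coordP K Q n PA basA (pM m)))
    (hΦsurj : Function.Surjective Φm)
    {i j : Q.V} (z : (Qe Q t pM).Path i j)
    (h2 : ph2 K Q n PA t pM T eT PB Φm (PB.ι z) ≠ 0) :
    1 ≤ numY Q t pM z ∨ (n ≤ z.length ∧ z.length ≤ s) := by
  by_cases hy : 1 ≤ numY Q t pM z
  · exact Or.inl hy
  · right
    obtain ⟨z₀, rfl⟩ := aux_exists_embed Q t pM z (by omega)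
    have hm := aux_main K Q n PA basA s w x k αm t pM T eT PB Φm hbas (by omega)
      (fun a b => hα a b) hTmul hΦnil (fun a => hΦarr a) z₀
    have h2' : (eT (Φm (PB.ι (embed Q t pM z₀)))).2 ≠ 0 := h2
    rw [aux_len_embed]
    constructor
    · by_contra h
      exact h2' (hm.2.1 (by omega))
    · by_contra h
      exact h2' (hm.2.2.1 (by omega))

end Statements
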